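/- arXiv:1906.02652 — 2 statements merged into one kernel-verified Lean document; each statement's English description precedes it below -/
import Mathlib

section
/- Let p be a probability distribution on a finite set X of size N and let q be calibrated with respect to p (i.e., for every t, the set B_t = {x : q_x = t} satisfies q(B_t) = p(B_t)). Then for every x in X, q_x ≥ p_x / N. -/
/-!
Calibration at the level `t = q x` says that the level set `B = {y | q y = t}` carries
`p`-mass `#B * t`. Since `x ∈ B` and `p ≥ 0`, this gives `p x ≤ #B * t`; in particular `t ≥ 0`,
and then `#B ≤ N` yields `p x ≤ N * q x`.
-/

open Finset

section

variable {X : Type*} [Fintype X]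

theorem sum_ite_eq_card_filter_mul (q : X → ℝ) (t : ℝ) :
    ∑ x, (if q x = t then q x else 0) = #{x | q x = t} * t := by
  rw [← sum_filter, sum_congr rfl fun x hx => (mem_filter.mp hx).2, sum_const, nsmul_eq_mul]

theorem le_card_level_mul_of_calibrated {p q : X → ℝ} (hp0 : ∀ x, 0 ≤ p x) (x : X)
    (hcal : ∑ y, (if q y = q x then q y else 0) = ∑ y, (if q y = q x then p y else 0)) :
    p x ≤ #{y | q y = q x} * q x := by
  rw [← sum_ite_eq_card_filter_mul, hcal, ← sum_filter]
  exact single_le_sum (fun y _ => hp0 y) (mem_filter.mpr ⟨mem_univ x, rfl⟩)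

end

open Classical in
theorem stmt_0_general {X : Type*} [Fintype X] (N : ℕ) (hN : Fintype.card X = N)
    (p q : X → ℝ)
    (hp0 : ∀ x, 0 ≤ p x)
    (hcal : ∀ t : ℝ,
      ∑ x, (if q x = t then q x else 0) = ∑ x, (if q x = t then p x else 0)) :
    ∀ x, p x / N ≤ q x := by
  intro x
  have hpx := le_card_level_mul_of_calibrated hp0 x (hcal (q x))
  have hB : (0 : ℝ) < #{y | q y = q x} := by
    have hxB : x ∈ ({y | q y = q x} : Finset X) := mem_filter.mpr ⟨mem_univ x, rfl⟩
    exact_mod_cast card_pos.mpr ⟨x, hxB⟩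
  have hBN : (#{y | q y = q x} : ℝ) ≤ N := by exact_mod_cast hN ▸ card_le_univ _
  have hqx : 0 ≤ q x := nonneg_of_mul_nonneg_right ((hp0 x).trans hpx) hB
  rw [div_le_iff₀ (hB.trans_le hBN)]
  calc p x ≤ #{y | q y = q x} * q x := hpx
    _ ≤ N * q x := by gcongr
    _ = q x * N := mul_comm _ _

open Classical in
/-- If `q` is calibrated with respect to `p` on a finite set of size `N`,
then `q x ≥ p x / N` for every `x`. -/
theorem stmt_0 {X : Type*} [Fintype X] (N : ℕ) (hN : Fintype.card X = N)
    (p q : X → ℝ)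
    (hp0 : ∀ x, 0 ≤ p x) (hp1 : ∑ x, p x = 1)
    (hq0 : ∀ x, 0 ≤ q x) (hq1 : ∑ x, q x = 1)
    (hcal : ∀ t : ℝ,
      ∑ x, (if q x = t then q x else 0) = ∑ x, (if q x = t then p x else 0)) :
    ∀ x, p x / N ≤ q x :=
  stmt_0_general N hN p q hp0 hcal
end

section
/- The quadratic loss is not strongly proper in ℓ₁ norm: for every β > 0 there exist N and distributions p, q on a set of size N with ‖p−q‖₁ = ε > 0 such that ℓ(q;p) − ℓ(p;p) = ε²/(2N) < (β/2)ε². Concretely, taking q uniform and p_x = (1±ε)/N on two halves, the difference in expected quadratic loss is (1/2)‖p−q‖₂² = ε²/(2N). -/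
/-!
Perturb the uniform distribution `q` on `N` points by `± ε / N`, with the signs balanced so
that `p` is still a distribution. Then `‖p - q‖₁ = ε` while `‖p - q‖₂² = ε² / N`, and the
quadratic loss gap is `‖p - q‖₂² / 2`. Hence the ratio of the gap to `‖p - q‖₁²` is `1 / (2N)`,
which is below any `β / 2` once `N > 1 / β`.
-/

open Finset

section QuadraticLoss

variable {ι : Type*} [Fintype ι] [DecidableEq ι]

noncomputable def quadraticLoss (q : ι → ℝ) (x : ι) : ℝ :=
  (1 / 2) * ∑ y, ((if y = x then (1 : ℝ) else 0) - q y) ^ 2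

lemma quadraticLoss_eq (q : ι → ℝ) (x : ι) :
    quadraticLoss q x = (1 / 2) * (1 - 2 * q x + ∑ y, q y ^ 2) := by
  have hterm : ∀ y, ((if y = x then (1 : ℝ) else 0) - q y) ^ 2
      = (if y = x then 1 - 2 * q x else 0) + q y ^ 2 := by
    intro y
    split_ifs with h
    · subst h; ring
    · ring
  simp only [quadraticLoss, hterm, sum_add_distrib, sum_ite_eq', mem_univ, if_true]

lemma sum_mul_quadraticLoss_sub {p : ι → ℝ} (hp : ∑ x, p x = 1) (q : ι → ℝ) :
    ∑ x, p x * quadraticLoss q x - ∑ x, p x * quadraticLoss p x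
      = (1 / 2) * ∑ x, (p x - q x) ^ 2 := by
  have hexp : ∀ r : ι → ℝ, ∑ x, p x * quadraticLoss r x
      = (1 / 2) * (1 - 2 * ∑ x, p x * r x + ∑ y, r y ^ 2) := by
    intro r
    simp only [quadraticLoss_eq]
    have : ∀ x, p x * ((1 / 2) * (1 - 2 * r x + ∑ y, r y ^ 2))
        = (1 / 2) * (p x * (1 + ∑ y, r y ^ 2) - 2 * (p x * r x)) := fun x => by ring
    simp only [this, ← mul_sum, sum_sub_distrib, ← sum_mul, hp]
    ring
  have hsq : ∑ x, (p x - q x) ^ 2 = ∑ x, p x * p x - 2 * ∑ x, p x * q x + ∑ x, q x ^ 2 := by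
    rw [mul_sum, ← sum_sub_distrib, ← sum_add_distrib]
    exact sum_congr rfl fun x _ => by ring
  rw [hexp, hexp, hsq, sum_congr rfl fun x _ => sq (p x)]
  ring

end QuadraticLoss

section PerturbedUniform

variable {ι : Type*} [Fintype ι]

noncomputable def uniformPerturbation (s : ι → ℝ) (ε : ℝ) (x : ι) : ℝ :=
  (1 + ε * s x) / Fintype.card ι

variable {s : ι → ℝ}

lemma uniformPerturbation_nonneg {ε : ℝ} (hε : |ε| ≤ 1) (hs : ∀ x, |s x| = 1) (x : ι) :
    0 ≤ uniformPerturbation s ε x := by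
  have : |ε * s x| ≤ 1 := by rwa [abs_mul, hs, mul_one]
  exact div_nonneg (by linarith [neg_abs_le (ε * s x)]) (Nat.cast_nonneg _)

lemma sum_uniformPerturbation [Nonempty ι] (hs : ∑ x, s x = 0) (ε : ℝ) :
    ∑ x, uniformPerturbation s ε x = 1 := by
  have hcard : (Fintype.card ι : ℝ) ≠ 0 := by positivity
  simp only [uniformPerturbation, ← sum_div, sum_add_distrib, ← mul_sum, hs, mul_zero,
    add_zero, sum_const, card_univ, nsmul_eq_mul, mul_one]
  exact div_self hcard

lemma uniformPerturbation_sub (ε : ℝ) (x : ι) :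
    uniformPerturbation s ε x - 1 / Fintype.card ι = ε * s x / Fintype.card ι := by
  rw [uniformPerturbation, ← sub_div, add_sub_cancel_left]

lemma sum_abs_uniformPerturbation_sub [Nonempty ι] (hs : ∀ x, |s x| = 1) (ε : ℝ) :
    ∑ x, |uniformPerturbation s ε x - 1 / Fintype.card ι| = |ε| := by
  have hcard : (0 : ℝ) < Fintype.card ι := by positivity
  simp only [uniformPerturbation_sub, abs_div, abs_mul, hs, mul_one, abs_of_pos hcard,
    sum_const, card_univ, nsmul_eq_mul]
  field_simp

lemma sum_sq_uniformPerturbation_sub [Nonempty ι] (hs : ∀ x, |s x| = 1) (ε : ℝ) :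
    ∑ x, (uniformPerturbation s ε x - 1 / Fintype.card ι) ^ 2 = ε ^ 2 / Fintype.card ι := by
  have hcard : (Fintype.card ι : ℝ) ≠ 0 := by positivity
  have hsq : ∀ x, s x ^ 2 = 1 := fun x => by rw [← sq_abs, hs, one_pow]
  simp only [uniformPerturbation_sub, div_pow, mul_pow, hsq, mul_one, sum_const, card_univ,
    nsmul_eq_mul]
  field_simp

end PerturbedUniform

def halfSign (n : ℕ) : Fin (n + n) → ℝ :=
  Fin.append (fun _ => 1) (fun _ => -1)

lemma abs_halfSign {n : ℕ} (x : Fin (n + n)) : |halfSign n x| = 1 := by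
  refine Fin.addCases (fun i => ?_) (fun i => ?_) x <;>
    simp only [halfSign, Fin.append_left, Fin.append_right, abs_one, abs_neg]

lemma sum_halfSign (n : ℕ) : ∑ x, halfSign n x = 0 := by
  simp only [halfSign, Fin.sum_univ_add, Fin.append_left, Fin.append_right, sum_const,
    smul_neg, add_neg_cancel]

/-- The quadratic loss is not strongly proper in the ℓ₁ norm: for every `β > 0`
there are distributions `p, q` on a set of size `N` with `‖p - q‖₁ = ε > 0` such
that the gap in expected quadratic loss is `ε²/(2N) < (β/2) ε²`. -/
theorem stmt_14 :
    ∀ β : ℝ, 0 < β →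
      ∃ (N : ℕ) (p q : Fin N → ℝ) (ε : ℝ),
        0 < N ∧
        (∀ x, 0 ≤ p x) ∧ (∑ x, p x = 1) ∧
        (∀ x, 0 ≤ q x) ∧ (∑ x, q x = 1) ∧
        0 < ε ∧ (∑ x, |p x - q x|) = ε ∧
        (∑ x, p x * ((1 / 2) * ∑ y, ((if y = x then (1 : ℝ) else 0) - q y) ^ 2))
          - (∑ x, p x * ((1 / 2) * ∑ y, ((if y = x then (1 : ℝ) else 0) - p y) ^ 2))
          = ε ^ 2 / (2 * N) ∧
        ε ^ 2 / (2 * N) < β / 2 * ε ^ 2 := by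
  intro β hβ
  obtain ⟨n, hn⟩ := exists_nat_gt β⁻¹
  have hn0 : 0 < n := by exact_mod_cast (inv_pos.2 hβ).trans hn
  have : NeZero (n + n) := ⟨by omega⟩
  have hsum := sum_uniformPerturbation (sum_halfSign n) 1
  have hNβ : 1 < β * (n + n : ℕ) := by
    have := (inv_lt_iff_one_lt_mul₀ hβ).1 hn
    push_cast
    nlinarith
  refine ⟨n + n, uniformPerturbation (halfSign n) 1, fun _ => 1 / (n + n : ℕ), 1, by omega,
    uniformPerturbation_nonneg (by norm_num) abs_halfSign, hsum, fun _ => by positivity, ?_,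
    one_pos, ?_, ?_, ?_⟩
  · simp only [sum_const, card_univ, Fintype.card_fin, nsmul_eq_mul]
    field_simp
  · simpa using sum_abs_uniformPerturbation_sub abs_halfSign (1 : ℝ)
  · have hgap := sum_mul_quadraticLoss_sub hsum (fun _ => 1 / (n + n : ℕ))
    have hl2 := sum_sq_uniformPerturbation_sub (abs_halfSign (n := n)) (1 : ℝ)
    simp only [quadraticLoss] at hgap
    rw [Fintype.card_fin] at hl2
    rw [hgap, hl2]
    ring
  · rw [one_pow, mul_one, div_lt_div_iff₀ (by positivity) two_pos]
    linarith
end
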